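/- (Pauli-twirling any channel yields a Pauli channel.) Let A_1, …, A_m be D×D complex matrices with ∑_j A_j† A_j = I (Kraus operators of a trace-preserving map). Then for every D×D matrix ρ, (1/D²) ∑_{(a,b)} ∑_j P(a,b) A_j P(a,b) · ρ · P(a,b) A_j† P(a,b) = ∑_{(a,b)} q(a,b) · P(a,b) ρ P(a,b), where q(a,b) = ∑_j |Tr(P(a,b)·A_j)|²/D²; the coefficients q(a,b) are nonnegative reals and satisfy ∑_{(a,b)} q(a,b) = 1. -/
import Mathlib


open scoped Matrix BigOperators

/-- Integer dot product of two vectors over `𝔽₂`. -/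
def dotZ {n : ℕ} (a b : Fin n → ZMod 2) : ℕ := ∑ j, (a j).val * (b j).val

/-- The Pauli matrix `P(a,b)` on `n` qubits. -/
noncomputable def Pauli {n : ℕ} (a b : Fin n → ZMod 2) :
    Matrix (Fin n → ZMod 2) (Fin n → ZMod 2) ℂ :=
  Matrix.of fun x y =>
    if x = y + a then Complex.I ^ dotZ a b * (-1 : ℂ) ^ dotZ b y else 0

/-- The Pauli-channel coefficient `q(a,b) = ∑_j |Tr(P(a,b)·A_j)|²/D²`. -/
noncomputable def pauliProb {n m : ℕ}
    (A : Fin m → Matrix (Fin n → ZMod 2) (Fin n → ZMod 2) ℂ)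
    (a b : Fin n → ZMod 2) : ℝ :=
  (∑ j, Complex.normSq ((Pauli a b * A j).trace)) / ((2 : ℝ) ^ n) ^ 2



lemma neg_one_pow_mod_two (k : ℕ) : ((-1 : ℂ)) ^ (k % 2) = (-1) ^ k := by
  conv_rhs => rw [← Nat.mod_add_div k 2, pow_add, pow_mul]
  simp

lemma dotZ_comm {n : ℕ} (a b : Fin n → ZMod 2) : dotZ a b = dotZ b a := by
  unfold dotZ; exact Finset.sum_congr rfl fun j _ => Nat.mul_comm _ _

lemma dotZ_mod_add {n : ℕ} (b x y : Fin n → ZMod 2) :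
    dotZ b (x + y) % 2 = (dotZ b x + dotZ b y) % 2 := by
  have key : ∀ j, (b j).val * ((x + y) j).val % 2
      = ((b j).val * (x j).val + (b j).val * (y j).val) % 2 := by
    intro j
    have h : ((x + y) j).val = ((x j).val + (y j).val) % 2 := by
      show ((x j) + (y j)).val = _
      exact ZMod.val_add _ _
    rw [h, Nat.mul_mod, Nat.mod_mod_of_dvd _ dvd_rfl, ← Nat.mul_mod, mul_add]
  unfold dotZ
  rw [Finset.sum_nat_mod]
  simp only [key]
  rw [← Finset.sum_nat_mod, ← Finset.sum_add_distrib]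

lemma neg_one_pow_dot_add {n : ℕ} (b x y : Fin n → ZMod 2) :
    ((-1 : ℂ)) ^ dotZ b (x + y) = (-1) ^ dotZ b x * (-1) ^ dotZ b y := by
  rw [← neg_one_pow_mod_two, dotZ_mod_add, neg_one_pow_mod_two, pow_add]

lemma sum_neg_one_pow {n : ℕ} (x : Fin n → ZMod 2) :
    ∑ b : Fin n → ZMod 2, ((-1 : ℂ)) ^ dotZ b x
      = if x = 0 then (2 : ℂ) ^ n else 0 := by
  have h1 : ∀ b : Fin n → ZMod 2, ((-1 : ℂ)) ^ dotZ b x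
      = ∏ j, ((-1 : ℂ)) ^ ((b j).val * (x j).val) := fun b => by
    rw [dotZ, Finset.prod_pow_eq_pow_sum]
  simp_rw [h1]
  rw [← Fintype.prod_sum (fun j (v : ZMod 2) => ((-1 : ℂ)) ^ (v.val * (x j).val))]
  have h2 : ∀ j, (∑ v : ZMod 2, ((-1 : ℂ)) ^ (v.val * (x j).val))
      = if x j = 0 then 2 else 0 := by
    intro j
    have hu : (Finset.univ : Finset (ZMod 2)) = {0, 1} := by decide
    rw [hu, Finset.sum_insert (by decide), Finset.sum_singleton]
    by_cases h : x j = 0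
    · simp [h]; norm_num
    · have h1' : x j = 1 := by exact (by decide : ∀ z : ZMod 2, z ≠ 0 → z = 1) _ h
      simp [h1', ZMod.val_zero, ZMod.val_one]
  simp_rw [h2]
  by_cases hx : x = 0
  · simp [hx]
  · obtain ⟨j, hj⟩ : ∃ j, x j ≠ 0 := by
      by_contra h; push_neg at h; exact hx (funext h)
    rw [if_neg hx]
    exact Finset.prod_eq_zero (Finset.mem_univ j) (by simp [hj])

-- group facts over (Fin n → ZMod 2)
lemma two_torsion {n : ℕ} (v : Fin n → ZMod 2) : v + v = 0 := by
  funext j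
  show v j + v j = 0
  exact (by decide : ∀ z : ZMod 2, z + z = 0) _

lemma add_cancel_right {n : ℕ} (v a : Fin n → ZMod 2) : v + a + a = v := by
  rw [add_assoc, two_torsion, add_zero]

lemma eq_add_iff {n : ℕ} (x z a : Fin n → ZMod 2) : x = z + a ↔ z = x + a := by
  constructor <;> (rintro rfl; rw [add_cancel_right])

lemma add_eq_zero_iff_eq {n : ℕ} (v w : Fin n → ZMod 2) : v + w = 0 ↔ v = w := by
  constructor
  · intro h
    have := congrArg (· + w) h
    simpa [add_cancel_right] using this
  · rintro rfl; exact two_torsion _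

lemma Pauli_apply {n : ℕ} (a b x y : Fin n → ZMod 2) :
    Pauli a b x y = if x = y + a then Complex.I ^ dotZ a b * (-1 : ℂ) ^ dotZ b y else 0 := rfl

lemma Pauli_mul_apply {n : ℕ} (a b : Fin n → ZMod 2)
    (M : Matrix (Fin n → ZMod 2) (Fin n → ZMod 2) ℂ) (x y : Fin n → ZMod 2) :
    (Pauli a b * M) x y
      = Complex.I ^ dotZ a b * (-1 : ℂ) ^ dotZ b (x + a) * M (x + a) y := by
  rw [Matrix.mul_apply, Finset.sum_eq_single (x + a)]
  · rw [Pauli_apply, if_pos ((eq_add_iff x (x+a) a).mpr rfl)]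
  · intro z _ hz
    rw [Pauli_apply, if_neg, zero_mul]
    intro h
    exact hz ((eq_add_iff x z a).mp h)
  · simp

lemma mul_Pauli_apply {n : ℕ} (a b : Fin n → ZMod 2)
    (M : Matrix (Fin n → ZMod 2) (Fin n → ZMod 2) ℂ) (x y : Fin n → ZMod 2) :
    (M * Pauli a b) x y
      = M x (y + a) * (Complex.I ^ dotZ a b * (-1 : ℂ) ^ dotZ b y) := by
  rw [Matrix.mul_apply, Finset.sum_eq_single (y + a)]
  · rw [Pauli_apply, if_pos rfl]
  · intro z _ hz
    rw [Pauli_apply, if_neg (fun h => hz h), mul_zero]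
  · simp

lemma I_pow_sq (k : ℕ) : Complex.I ^ k * Complex.I ^ k = (-1 : ℂ) ^ k := by
  rw [← mul_pow, Complex.I_mul_I]

lemma neg_one_pow_sq (k : ℕ) : ((-1 : ℂ)) ^ k * (-1 : ℂ) ^ k = 1 := by
  rw [← mul_pow]; norm_num

lemma Pauli_mul_self {n : ℕ} (a b : Fin n → ZMod 2) :
    Pauli a b * Pauli a b = 1 := by
  ext x y
  rw [Pauli_mul_apply, Pauli_apply]
  by_cases h : x = y
  · subst h
    rw [if_pos rfl, Matrix.one_apply_eq]
    rw [neg_one_pow_dot_add, dotZ_comm b a]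
    have e1 : Complex.I ^ dotZ a b * Complex.I ^ dotZ a b = (-1 : ℂ) ^ dotZ a b :=
      I_pow_sq _
    have e2 := neg_one_pow_sq (dotZ a b)
    have e3 := neg_one_pow_sq (dotZ b x)
    calc Complex.I ^ dotZ a b * ((-1:ℂ) ^ dotZ b x * (-1:ℂ) ^ dotZ a b)
          * (Complex.I ^ dotZ a b * (-1:ℂ) ^ dotZ b x)
        = (Complex.I ^ dotZ a b * Complex.I ^ dotZ a b)
          * ((-1:ℂ) ^ dotZ b x * (-1:ℂ) ^ dotZ b x) * (-1:ℂ) ^ dotZ a b := by ring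
      _ = 1 := by rw [e1, e3, mul_one, e2]
  · rw [if_neg, mul_zero, Matrix.one_apply_ne h]
    intro hc
    exact h (by rw [(eq_add_iff (x+a) y a).mp hc, add_cancel_right])

lemma Pauli_conjTranspose {n : ℕ} (a b : Fin n → ZMod 2) :
    (Pauli a b)ᴴ = Pauli a b := by
  ext x y
  rw [Matrix.conjTranspose_apply, Pauli_apply, Pauli_apply]
  by_cases h : x = y + a
  · rw [if_pos ((eq_add_iff x y a).mp h), if_pos h]
    subst h
    rw [star_mul', star_pow, star_pow]
    have hI : star Complex.I = -Complex.I := by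
      simp [Complex.star_def, Complex.conj_I]
    have hm : star (-1 : ℂ) = -1 := by simp
    rw [hI, hm, neg_one_pow_dot_add, dotZ_comm b a]
    have e1 : (-Complex.I) ^ dotZ a b * (-1 : ℂ) ^ dotZ a b = Complex.I ^ dotZ a b := by
      rw [← mul_pow]; norm_num
    linear_combination ((-1:ℂ) ^ dotZ b y) * e1
  · rw [if_neg (fun hc => h ((eq_add_iff y x a).mp hc)), if_neg h, star_zero]

lemma add_swap_imp {n : ℕ} (x y a c : Fin n → ZMod 2) (h : x + a = y + c) :
    x + c = y + a := by
  have hx : x = y + c + a := by rw [← h, add_cancel_right]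
  subst hx
  calc y + c + a + c = y + a + (c + c) := by abel
    _ = y + a := by rw [two_torsion, add_zero]

lemma Pauli_comm {n : ℕ} (a b c d : Fin n → ZMod 2) :
    Pauli a b * Pauli c d
      = ((-1 : ℂ)) ^ (dotZ a d + dotZ b c) • (Pauli c d * Pauli a b) := by
  ext x y
  rw [Pauli_mul_apply, Matrix.smul_apply, smul_eq_mul, Pauli_mul_apply, Pauli_apply, Pauli_apply]
  by_cases h : x + a = y + c
  · have h' : x + c = y + a := add_swap_imp x y a c h
    rw [if_pos h, if_pos h', h, h']
    rw [neg_one_pow_dot_add b y c, neg_one_pow_dot_add d y a, pow_add,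
      dotZ_comm d a]
    have e := neg_one_pow_sq (dotZ a d)
    linear_combination (-(Complex.I ^ dotZ a b * Complex.I ^ dotZ c d *
      (-1:ℂ) ^ dotZ b y * (-1:ℂ) ^ dotZ b c * (-1:ℂ) ^ dotZ d y)) * e
  · have h' : ¬(x + c = y + a) := fun hc => h (add_swap_imp x y c a hc)
    rw [if_neg h, if_neg h', mul_zero, mul_zero, mul_zero]

lemma trace_Pauli_mul {n : ℕ} (a b : Fin n → ZMod 2)
    (M : Matrix (Fin n → ZMod 2) (Fin n → ZMod 2) ℂ) :
    (Pauli a b * M).trace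
      = ∑ z, Complex.I ^ dotZ a b * (-1 : ℂ) ^ dotZ b (z + a) * M (z + a) z := by
  rw [Matrix.trace]
  exact Finset.sum_congr rfl fun z _ => Pauli_mul_apply a b M z z

lemma trace_Pauli_mul_Pauli {n : ℕ} (a b c d : Fin n → ZMod 2) :
    (Pauli a b * Pauli c d).trace
      = if a = c ∧ b = d then (2 : ℂ) ^ n else 0 := by
  rw [trace_Pauli_mul]
  by_cases hac : a = c
  · subst hac
    have hterm : ∀ z : Fin n → ZMod 2,
        Complex.I ^ dotZ a b * (-1:ℂ) ^ dotZ b (z + a) * Pauli a d (z + a) z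
        = (Complex.I ^ dotZ a b * Complex.I ^ dotZ a d * (-1:ℂ) ^ dotZ b a)
          * (-1:ℂ) ^ dotZ z (b + d) := by
      intro z
      rw [Pauli_apply, if_pos rfl, neg_one_pow_dot_add b z a, neg_one_pow_dot_add z b d,
        dotZ_comm z b, dotZ_comm z d]
      ring
    simp_rw [hterm]
    rw [← Finset.mul_sum, sum_neg_one_pow]
    by_cases hbd : b = d
    · subst hbd
      rw [if_pos (two_torsion b), if_pos (by simp)]
      rw [dotZ_comm b a]
      have e1 := I_pow_sq (dotZ a b)
      have e2 := neg_one_pow_sq (dotZ a b)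
      linear_combination ((2:ℂ)^n * (-1:ℂ)^dotZ a b) * e1 + (2:ℂ)^n * e2
    · rw [if_neg (fun hc => hbd ((add_eq_zero_iff_eq b d).mp hc)),
        if_neg (fun hc => hbd hc.2), mul_zero]
  · have step2 : ∀ z : Fin n → ZMod 2,
        Complex.I ^ dotZ a b * (-1:ℂ) ^ dotZ b (z + a) * Pauli c d (z + a) z = 0 := by
      intro z
      rw [Pauli_apply, if_neg (fun hc => hac (add_left_cancel hc)), mul_zero]
    rw [Finset.sum_eq_zero fun z _ => step2 z, if_neg (fun hc => hac hc.1)]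


lemma eq_addR_iff {n : ℕ} (x y a : Fin n → ZMod 2) : x = y + a ↔ a = x + y := by
  constructor
  · rintro rfl
    have h : y + a + y = a := by
      calc y + a + y = a + (y + y) := by abel
        _ = a := by rw [two_torsion, add_zero]
    exact h.symm
  · rintro rfl
    have h : y + (x + y) = x := by
      calc y + (x + y) = x + (y + y) := by abel
        _ = x := by rw [two_torsion, add_zero]
    exact h.symm

lemma sum_trace_mul_phase {n : ℕ} (a y : Fin n → ZMod 2)
    (M : Matrix (Fin n → ZMod 2) (Fin n → ZMod 2) ℂ) :
    ∑ b : Fin n → ZMod 2,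
        (Pauli a b * M).trace * (Complex.I ^ dotZ a b * (-1 : ℂ) ^ dotZ b y)
      = (2 : ℂ) ^ n * M (y + a) y := by
  simp_rw [trace_Pauli_mul, Finset.sum_mul]
  rw [Finset.sum_comm]
  have hterm : ∀ z b : Fin n → ZMod 2,
      Complex.I ^ dotZ a b * (-1 : ℂ) ^ dotZ b (z + a) * M (z + a) z
          * (Complex.I ^ dotZ a b * (-1 : ℂ) ^ dotZ b y)
        = M (z + a) z * (-1 : ℂ) ^ dotZ b (z + y) := by
    intro z b
    rw [neg_one_pow_dot_add b z a, neg_one_pow_dot_add b z y, dotZ_comm b a]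
    have e1 := I_pow_sq (dotZ a b)
    have e2 := neg_one_pow_sq (dotZ a b)
    linear_combination (M (z + a) z * (-1:ℂ) ^ dotZ b z * (-1:ℂ) ^ dotZ b y
        * (-1:ℂ) ^ dotZ a b) * e1
      + (M (z + a) z * (-1:ℂ) ^ dotZ b z * (-1:ℂ) ^ dotZ b y) * e2
  simp_rw [hterm, ← Finset.mul_sum, sum_neg_one_pow]
  rw [Finset.sum_eq_single y]
  · rw [if_pos (two_torsion y), mul_comm]
  · intro z _ hz
    rw [if_neg (fun hc => hz ((add_eq_zero_iff_eq z y).mp hc)), mul_zero]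
  · simp

lemma Pauli_expansion {n : ℕ} (M : Matrix (Fin n → ZMod 2) (Fin n → ZMod 2) ℂ) :
    M = ((2 : ℂ) ^ n)⁻¹ •
      ∑ a : Fin n → ZMod 2, ∑ b : Fin n → ZMod 2, (Pauli a b * M).trace • Pauli a b := by
  ext x y
  rw [Matrix.smul_apply]
  simp only [Matrix.sum_apply, Matrix.smul_apply, smul_eq_mul]
  rw [Finset.sum_eq_single (x + y)]
  · have hx : x = y + (x + y) := (eq_addR_iff x y (x + y)).mpr rfl
    have hp : ∀ b : Fin n → ZMod 2, Pauli (x + y) b x y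
        = Complex.I ^ dotZ (x + y) b * (-1 : ℂ) ^ dotZ b y := by
      intro b; rw [Pauli_apply, if_pos hx]
    simp_rw [hp]
    rw [sum_trace_mul_phase (x + y) y M, ← hx, ← mul_assoc,
      inv_mul_cancel₀ (pow_ne_zero _ two_ne_zero), one_mul]
  · intro a _ ha
    refine Finset.sum_eq_zero fun b _ => ?_
    rw [Pauli_apply, if_neg (fun hc => ha ((eq_addR_iff x y a).mp hc)), mul_zero]
  · simp


lemma trace_conjT_mul_Pauli {n : ℕ} (c d : Fin n → ZMod 2)
    (M : Matrix (Fin n → ZMod 2) (Fin n → ZMod 2) ℂ) :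
    (Mᴴ * Pauli c d).trace = (starRingEnd ℂ) ((Pauli c d * M).trace) := by
  have h1 : (Mᴴ * Pauli c d) = ((Pauli c d * M)ᴴ) := by
    rw [Matrix.conjTranspose_mul, Pauli_conjTranspose]
  rw [h1, Matrix.trace_conjTranspose]
  rfl

lemma trace_conjT_mul_expand {n : ℕ} (M : Matrix (Fin n → ZMod 2) (Fin n → ZMod 2) ℂ) :
    (Mᴴ * M).trace = ((2 : ℂ) ^ n)⁻¹ *
      ∑ c : Fin n → ZMod 2, ∑ d : Fin n → ZMod 2,
        (Pauli c d * M).trace * (Mᴴ * Pauli c d).trace := by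
  set N := Mᴴ with hN
  conv_lhs => rw [Pauli_expansion M]
  rw [Matrix.mul_smul, Matrix.trace_smul, smul_eq_mul]
  congr 1
  rw [Matrix.mul_sum, Matrix.trace_sum]
  refine Finset.sum_congr rfl fun c _ => ?_
  rw [Matrix.mul_sum, Matrix.trace_sum]
  refine Finset.sum_congr rfl fun d _ => ?_
  rw [Matrix.mul_smul, Matrix.trace_smul, smul_eq_mul]

lemma sum_normSq_trace {n : ℕ} (M : Matrix (Fin n → ZMod 2) (Fin n → ZMod 2) ℂ) :
    ∑ c : Fin n → ZMod 2, ∑ d : Fin n → ZMod 2,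
        (Pauli c d * M).trace * (starRingEnd ℂ) ((Pauli c d * M).trace)
      = (2 : ℂ) ^ n * (Mᴴ * M).trace := by
  simp_rw [← trace_conjT_mul_Pauli]
  rw [trace_conjT_mul_expand M, ← mul_assoc,
    mul_inv_cancel₀ (pow_ne_zero _ (two_ne_zero : (2:ℂ) ≠ 0)), one_mul]

lemma card_K {n : ℕ} : Fintype.card (Fin n → ZMod 2) = 2 ^ n := by
  simp [Fintype.card_fun]

lemma trace_one_K {n : ℕ} :
    (1 : Matrix (Fin n → ZMod 2) (Fin n → ZMod 2) ℂ).trace = (2 : ℂ) ^ n := by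
  rw [Matrix.trace_one, card_K]
  push_cast
  ring


lemma Pauli_conj_Pauli {n : ℕ} (a b c d : Fin n → ZMod 2) :
    Pauli a b * Pauli c d * Pauli a b
      = ((-1 : ℂ)) ^ (dotZ a d + dotZ b c) • Pauli c d := by
  rw [Pauli_comm a b c d, Matrix.smul_mul, mul_assoc, Pauli_mul_self, mul_one]

lemma twirl_mat {n : ℕ} (a b : Fin n → ZMod 2)
    (M : Matrix (Fin n → ZMod 2) (Fin n → ZMod 2) ℂ) :
    Pauli a b * M * Pauli a b
      = ((2 : ℂ) ^ n)⁻¹ • ∑ c : Fin n → ZMod 2, ∑ d : Fin n → ZMod 2,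
          (((-1 : ℂ)) ^ (dotZ a d + dotZ b c) * (Pauli c d * M).trace) • Pauli c d := by
  conv_lhs => rw [Pauli_expansion M]
  rw [Matrix.mul_smul, Matrix.smul_mul]
  congr 1
  rw [Matrix.mul_sum, Matrix.sum_mul]
  refine Finset.sum_congr rfl fun c _ => ?_
  rw [Matrix.mul_sum, Matrix.sum_mul]
  refine Finset.sum_congr rfl fun d _ => ?_
  rw [Matrix.mul_smul, Matrix.smul_mul, Pauli_conj_Pauli, smul_smul, mul_comm]

lemma conjT_expand {n : ℕ} (M : Matrix (Fin n → ZMod 2) (Fin n → ZMod 2) ℂ) :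
    Mᴴ = ((2 : ℂ) ^ n)⁻¹ • ∑ c : Fin n → ZMod 2, ∑ d : Fin n → ZMod 2,
        ((starRingEnd ℂ) ((Pauli c d * M).trace)) • Pauli c d := by
  conv_lhs => rw [Pauli_expansion M]
  rw [Matrix.conjTranspose_smul]
  congr 1
  · simp
  rw [Matrix.conjTranspose_sum]
  refine Finset.sum_congr rfl fun c _ => ?_
  rw [Matrix.conjTranspose_sum]
  refine Finset.sum_congr rfl fun d _ => ?_
  rw [Matrix.conjTranspose_smul, Pauli_conjTranspose]
  rfl

lemma sigma_sum {n : ℕ} (q q' : (Fin n → ZMod 2) × (Fin n → ZMod 2)) :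
    ∑ p : (Fin n → ZMod 2) × (Fin n → ZMod 2),
        ((-1 : ℂ)) ^ (dotZ p.1 q.2 + dotZ p.2 q.1)
          * ((-1 : ℂ)) ^ (dotZ p.1 q'.2 + dotZ p.2 q'.1)
      = if q = q' then ((2 : ℂ) ^ n) * ((2 : ℂ) ^ n) else 0 := by
  rw [Fintype.sum_prod_type]
  have hterm : ∀ a b : Fin n → ZMod 2,
      ((-1 : ℂ)) ^ (dotZ a q.2 + dotZ b q.1) * ((-1 : ℂ)) ^ (dotZ a q'.2 + dotZ b q'.1)
        = ((-1 : ℂ)) ^ dotZ a (q.2 + q'.2) * ((-1 : ℂ)) ^ dotZ b (q.1 + q'.1) := by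
    intro a b
    rw [pow_add, pow_add, neg_one_pow_dot_add a q.2 q'.2, neg_one_pow_dot_add b q.1 q'.1]
    ring
  simp_rw [hterm]
  rw [← Finset.sum_mul_sum]
  rw [sum_neg_one_pow, sum_neg_one_pow]
  by_cases h1 : q.2 = q'.2
  · by_cases h2 : q.1 = q'.1
    · rw [if_pos ((add_eq_zero_iff_eq _ _).mpr h1), if_pos ((add_eq_zero_iff_eq _ _).mpr h2),
        if_pos (Prod.ext h2 h1)]
    · rw [if_neg (fun hc => h2 ((add_eq_zero_iff_eq _ _).mp hc)), mul_zero,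
        if_neg (fun hc => h2 (congrArg Prod.fst hc))]
  · rw [if_neg (fun hc => h1 ((add_eq_zero_iff_eq _ _).mp hc)), zero_mul,
      if_neg (fun hc => h1 (congrArg Prod.snd hc))]

lemma sum_swap4 {α β γ δ M : Type*} [Fintype α] [Fintype β] [Fintype γ] [Fintype δ]
    [AddCommMonoid M] (F : α → β → γ → δ → M) :
    ∑ p, ∑ j, ∑ q, ∑ q', F p j q q' = ∑ q, ∑ q', ∑ j, ∑ p, F p j q q' := by
  calc ∑ p, ∑ j, ∑ q, ∑ q', F p j q q'
      = ∑ j, ∑ p, ∑ q, ∑ q', F p j q q' := Finset.sum_comm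
    _ = ∑ j, ∑ q, ∑ p, ∑ q', F p j q q' :=
        Finset.sum_congr rfl fun j _ => Finset.sum_comm
    _ = ∑ j, ∑ q, ∑ q', ∑ p, F p j q q' :=
        Finset.sum_congr rfl fun j _ => Finset.sum_congr rfl fun q _ => Finset.sum_comm
    _ = ∑ q, ∑ j, ∑ q', ∑ p, F p j q q' := Finset.sum_comm
    _ = ∑ q, ∑ q', ∑ j, ∑ p, F p j q q' :=
        Finset.sum_congr rfl fun q _ => Finset.sum_comm

lemma trace_Pauli_mul_conjT {n : ℕ} (c d : Fin n → ZMod 2)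
    (M : Matrix (Fin n → ZMod 2) (Fin n → ZMod 2) ℂ) :
    (Pauli c d * Mᴴ).trace = (starRingEnd ℂ) ((Pauli c d * M).trace) := by
  rw [Matrix.trace_mul_comm, trace_conjT_mul_Pauli]

lemma twirl_mat' {n : ℕ} (p : (Fin n → ZMod 2) × (Fin n → ZMod 2))
    (M : Matrix (Fin n → ZMod 2) (Fin n → ZMod 2) ℂ) :
    Pauli p.1 p.2 * M * Pauli p.1 p.2
      = ((2 : ℂ) ^ n)⁻¹ • ∑ q : (Fin n → ZMod 2) × (Fin n → ZMod 2),
          (((-1 : ℂ)) ^ (dotZ p.1 q.2 + dotZ p.2 q.1) * (Pauli q.1 q.2 * M).trace)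
            • Pauli q.1 q.2 := by
  rw [twirl_mat p.1 p.2 M]
  congr 1
  rw [Fintype.sum_prod_type]

lemma twirl_inner {n : ℕ} (p : (Fin n → ZMod 2) × (Fin n → ZMod 2))
    (M ρ : Matrix (Fin n → ZMod 2) (Fin n → ZMod 2) ℂ) :
    (Pauli p.1 p.2 * M * Pauli p.1 p.2) * ρ * (Pauli p.1 p.2 * Mᴴ * Pauli p.1 p.2)
      = (((2 : ℂ) ^ n)⁻¹ * ((2 : ℂ) ^ n)⁻¹) •
          ∑ q : (Fin n → ZMod 2) × (Fin n → ZMod 2),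
          ∑ q' : (Fin n → ZMod 2) × (Fin n → ZMod 2),
            ((((-1 : ℂ)) ^ (dotZ p.1 q.2 + dotZ p.2 q.1) * (Pauli q.1 q.2 * M).trace)
              * (((-1 : ℂ)) ^ (dotZ p.1 q'.2 + dotZ p.2 q'.1)
                  * (starRingEnd ℂ) ((Pauli q'.1 q'.2 * M).trace)))
            • (Pauli q.1 q.2 * ρ * Pauli q'.1 q'.2) := by
  rw [twirl_mat' p M, twirl_mat' p Mᴴ]
  simp_rw [trace_Pauli_mul_conjT]
  rw [Matrix.smul_mul, Matrix.smul_mul, Matrix.mul_smul, smul_smul]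
  congr 1
  simp only [Matrix.sum_mul, Matrix.mul_sum, Matrix.smul_mul, Matrix.mul_smul, smul_smul,
    Finset.smul_sum]
  rw [Finset.sum_comm]
  exact Finset.sum_congr rfl fun q _ => Finset.sum_congr rfl fun q' _ => by rw [mul_comm]


lemma pauliProb_cast {n m : ℕ} (A : Fin m → Matrix (Fin n → ZMod 2) (Fin n → ZMod 2) ℂ)
    (q : (Fin n → ZMod 2) × (Fin n → ZMod 2)) :
    ((pauliProb A q.1 q.2 : ℝ) : ℂ)
      = (∑ j, (Pauli q.1 q.2 * A j).trace
          * (starRingEnd ℂ) ((Pauli q.1 q.2 * A j).trace)) / ((2 : ℂ) ^ n) ^ 2 := by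
  simp only [pauliProb]
  push_cast
  congr 1
  exact Finset.sum_congr rfl fun j _ => (Complex.mul_conj _).symm

lemma twirl_main {n m : ℕ} (A : Fin m → Matrix (Fin n → ZMod 2) (Fin n → ZMod 2) ℂ)
    (ρ : Matrix (Fin n → ZMod 2) (Fin n → ZMod 2) ℂ) :
    ((1 : ℂ) / ((2 : ℂ) ^ n) ^ 2) •
        ∑ a : Fin n → ZMod 2, ∑ b : Fin n → ZMod 2, ∑ j,
          (Pauli a b * A j * Pauli a b) * ρ * (Pauli a b * (A j)ᴴ * Pauli a b) =
      ∑ a : Fin n → ZMod 2, ∑ b : Fin n → ZMod 2,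
        (pauliProb A a b : ℂ) • (Pauli a b * ρ * Pauli a b) := by
  conv_lhs => rw [← Fintype.sum_prod_type']
  conv_rhs => rw [← Fintype.sum_prod_type']
  simp_rw [twirl_inner]
  simp_rw [← Finset.smul_sum]
  rw [smul_smul]
  rw [sum_swap4]
  have hp : ∀ (q q' : (Fin n → ZMod 2) × (Fin n → ZMod 2)) (j : Fin m),
      ∑ p : (Fin n → ZMod 2) × (Fin n → ZMod 2),
          ((((-1 : ℂ)) ^ (dotZ p.1 q.2 + dotZ p.2 q.1) * (Pauli q.1 q.2 * A j).trace)
            * (((-1 : ℂ)) ^ (dotZ p.1 q'.2 + dotZ p.2 q'.1)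
                * (starRingEnd ℂ) ((Pauli q'.1 q'.2 * A j).trace)))
          • (Pauli q.1 q.2 * ρ * Pauli q'.1 q'.2)
        = (((Pauli q.1 q.2 * A j).trace * (starRingEnd ℂ) ((Pauli q'.1 q'.2 * A j).trace))
            * (if q = q' then ((2 : ℂ) ^ n) * ((2 : ℂ) ^ n) else 0))
          • (Pauli q.1 q.2 * ρ * Pauli q'.1 q'.2) := by
    intro q q' j
    rw [← Finset.sum_smul]
    congr 1
    rw [← sigma_sum q q', Finset.mul_sum]
    exact Finset.sum_congr rfl fun p _ => by ring
  simp_rw [hp]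
  have hcol : ∀ q : (Fin n → ZMod 2) × (Fin n → ZMod 2),
      (∑ q' : (Fin n → ZMod 2) × (Fin n → ZMod 2), ∑ j,
          (((Pauli q.1 q.2 * A j).trace * (starRingEnd ℂ) ((Pauli q'.1 q'.2 * A j).trace))
            * (if q = q' then ((2 : ℂ) ^ n) * ((2 : ℂ) ^ n) else 0))
          • (Pauli q.1 q.2 * ρ * Pauli q'.1 q'.2))
        = ∑ j, (((Pauli q.1 q.2 * A j).trace * (starRingEnd ℂ) ((Pauli q.1 q.2 * A j).trace))
            * (((2 : ℂ) ^ n) * ((2 : ℂ) ^ n)))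
          • (Pauli q.1 q.2 * ρ * Pauli q.1 q.2) := by
    intro q
    rw [Finset.sum_eq_single q]
    · exact Finset.sum_congr rfl fun j _ => by rw [if_pos rfl]
    · intro q' _ hq'
      exact Finset.sum_eq_zero fun j _ => by
        rw [if_neg (fun hc => hq' hc.symm), mul_zero, zero_smul]
    · simp
  simp_rw [hcol]
  rw [Finset.smul_sum]
  refine Finset.sum_congr rfl fun q _ => ?_
  rw [← Finset.sum_smul, smul_smul]
  congr 1
  rw [pauliProb_cast A q, ← Finset.sum_mul]
  have hD : ((2 : ℂ) ^ n) ≠ 0 := pow_ne_zero _ two_ne_zero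
  field_simp


lemma pauliProb_sum_one {n m : ℕ}
    (A : Fin m → Matrix (Fin n → ZMod 2) (Fin n → ZMod 2) ℂ)
    (hA : ∑ j, (A j)ᴴ * A j = 1) :
    ∑ a : Fin n → ZMod 2, ∑ b : Fin n → ZMod 2, pauliProb A a b = 1 := by
  have hC : ((∑ a : Fin n → ZMod 2, ∑ b : Fin n → ZMod 2, ∑ j,
      Complex.normSq ((Pauli a b * A j).trace) : ℝ) : ℂ)
      = (2 : ℂ) ^ n * (2 : ℂ) ^ n := by
    push_cast
    have hmc : ∀ (a b : Fin n → ZMod 2) (j : Fin m),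
        ((Complex.normSq ((Pauli a b * A j).trace) : ℝ) : ℂ)
          = (Pauli a b * A j).trace * (starRingEnd ℂ) ((Pauli a b * A j).trace) :=
      fun a b j => (Complex.mul_conj _).symm
    simp_rw [hmc]
    have hswap : ∑ a : Fin n → ZMod 2, ∑ b : Fin n → ZMod 2, ∑ j,
          (Pauli a b * A j).trace * (starRingEnd ℂ) ((Pauli a b * A j).trace)
        = ∑ j, ∑ a : Fin n → ZMod 2, ∑ b : Fin n → ZMod 2,
          (Pauli a b * A j).trace * (starRingEnd ℂ) ((Pauli a b * A j).trace) := by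
      calc ∑ a : Fin n → ZMod 2, ∑ b : Fin n → ZMod 2, ∑ j, _
          = ∑ a : Fin n → ZMod 2, ∑ j, ∑ b : Fin n → ZMod 2, _ :=
            Finset.sum_congr rfl fun a _ => Finset.sum_comm
        _ = ∑ j, ∑ a : Fin n → ZMod 2, ∑ b : Fin n → ZMod 2, _ := Finset.sum_comm
    rw [hswap]
    simp_rw [sum_normSq_trace]
    rw [← Finset.mul_sum, ← Matrix.trace_sum, hA, trace_one_K]
  have hR : (∑ a : Fin n → ZMod 2, ∑ b : Fin n → ZMod 2, ∑ j,
      Complex.normSq ((Pauli a b * A j).trace) : ℝ) = (2 : ℝ) ^ n * (2 : ℝ) ^ n := by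
    have : (((2 : ℝ) ^ n * (2 : ℝ) ^ n : ℝ) : ℂ) = (2 : ℂ) ^ n * (2 : ℂ) ^ n := by
      push_cast; ring
    exact_mod_cast hC.trans this.symm
  simp only [pauliProb]
  simp_rw [← Finset.sum_div]
  rw [hR, pow_two]
  exact div_self (by positivity)


/-- Pauli-twirling any channel yields a Pauli channel. -/
theorem pauli_twirl_channel (n : ℕ) (hn : 1 ≤ n) (m : ℕ)
    (A : Fin m → Matrix (Fin n → ZMod 2) (Fin n → ZMod 2) ℂ)
    (hA : ∑ j, (A j)ᴴ * A j = 1)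
    (ρ : Matrix (Fin n → ZMod 2) (Fin n → ZMod 2) ℂ) :
    ((1 : ℂ) / ((2 : ℂ) ^ n) ^ 2) •
        ∑ a : Fin n → ZMod 2, ∑ b : Fin n → ZMod 2, ∑ j,
          (Pauli a b * A j * Pauli a b) * ρ * (Pauli a b * (A j)ᴴ * Pauli a b) =
      ∑ a : Fin n → ZMod 2, ∑ b : Fin n → ZMod 2,
        (pauliProb A a b : ℂ) • (Pauli a b * ρ * Pauli a b) ∧
    (∀ a b : Fin n → ZMod 2, 0 ≤ pauliProb A a b) ∧
    ∑ a : Fin n → ZMod 2, ∑ b : Fin n → ZMod 2, pauliProb A a b = 1 := by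
  refine ⟨twirl_main A ρ, fun a b => ?_, pauliProb_sum_one A hA⟩
  simp only [pauliProb]
  exact div_nonneg (Finset.sum_nonneg fun j _ => Complex.normSq_nonneg _) (by positivity)
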